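/- Let a, b, c be positive real numbers with a > 1 and c^(1/b) · b / ln(a) ≥ e. If x > -b · W₋₁(-ln(a)/(c^(1/b)·b)) / ln(a), where W₋₁ is the lower real branch of the Lambert W function, then a^x / x^b > c. -/

import Mathlib

/-! With `L = log a`, `k = c^(1/b)` and `w = W₋₁(-L/(k b))`, the threshold is `x₀ = -b w / L`.
Taking logarithms in `w e^w = -L/(k b)` gives `L x₀ - b log x₀ = b log k = log c`, and
`x ↦ L x - b log x` is strictly increasing on `[b/L, ∞)`, which contains `x₀` because `w ≤ -1`.
Since `a^x / x^b = exp (L x - b log x)`, this is the claim. -/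

/-- The lower real branch `W₋₁` of the Lambert W function (the inverse of `w ↦ w * exp w`),
defined on `[-1/e, 0)` with values in `(-∞, -1]`; realized as the infimum of the solution set. -/
noncomputable def lambertWm1 (y : ℝ) : ℝ := sInf {w : ℝ | w * Real.exp w = y}

open Real Filter Set

lemma tendsto_mul_exp_atBot : Tendsto (fun w : ℝ => w * exp w) atBot (nhds 0) := by
  simpa using ((tendsto_pow_mul_exp_neg_atTop_nhds_zero 1).comp tendsto_neg_atBot_atTop).neg

lemma exists_forall_le_lt_mul_exp {y : ℝ} (hy : y < 0) : ∃ N, ∀ w ≤ N, y < w * exp w :=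
  eventually_atBot.mp (tendsto_mul_exp_atBot.eventually (lt_mem_nhds hy))

section LambertWm1

variable {y : ℝ}

lemma bddBelow_setOf_mul_exp_eq (hy : y < 0) : BddBelow {w : ℝ | w * exp w = y} := by
  obtain ⟨N, hN⟩ := exists_forall_le_lt_mul_exp hy
  exact ⟨N, fun w hw => le_of_not_ge fun hwN => (hN w hwN).ne' hw⟩

lemma exists_le_neg_one_mul_exp_eq (hy₀ : -exp (-1) ≤ y) (hy : y < 0) :
    ∃ w ≤ -1, w * exp w = y := by
  obtain ⟨N, hN⟩ := exists_forall_le_lt_mul_exp hy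
  have hcont : ContinuousOn (fun w : ℝ => w * exp w) (Icc (min N (-1)) (-1)) := by fun_prop
  obtain ⟨w, hw, hwy⟩ := intermediate_value_Icc' (min_le_right N (-1)) hcont
    ⟨by simpa using hy₀, (hN _ (min_le_left N (-1))).le⟩
  exact ⟨w, hw.2, hwy⟩

theorem lambertWm1_mul_exp_self (hy₀ : -exp (-1) ≤ y) (hy : y < 0) :
    lambertWm1 y * exp (lambertWm1 y) = y := by
  obtain ⟨w, -, hw⟩ := exists_le_neg_one_mul_exp_eq hy₀ hy
  have hclosed : IsClosed {w : ℝ | w * exp w = y} := isClosed_eq (by fun_prop) continuous_const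
  exact hclosed.csInf_mem ⟨w, hw⟩ (bddBelow_setOf_mul_exp_eq hy)

theorem lambertWm1_le_neg_one (hy₀ : -exp (-1) ≤ y) (hy : y < 0) : lambertWm1 y ≤ -1 := by
  obtain ⟨w, hw₁, hw⟩ := exists_le_neg_one_mul_exp_eq hy₀ hy
  exact (csInf_le (bddBelow_setOf_mul_exp_eq hy) hw).trans hw₁

end LambertWm1

lemma strictMonoOn_mul_sub_mul_log {L b : ℝ} (hL : 0 < L) (hb : 0 < b) :
    StrictMonoOn (fun x => L * x - b * log x) (Ici (b / L)) := by
  intro x₀ hx₀ x _ hlt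
  have hx₀pos : 0 < x₀ := (div_pos hb hL).trans_le hx₀
  have hbL : b ≤ L * x₀ := (div_le_iff₀' hL).mp hx₀
  have hlog : log x - log x₀ < x / x₀ - 1 := by
    rw [← log_div (hx₀pos.trans hlt).ne' hx₀pos.ne']
    exact log_lt_sub_one_of_pos (div_pos (hx₀pos.trans hlt) hx₀pos) (div_ne_one_of_ne hlt.ne')
  have hlin : b * (x / x₀ - 1) ≤ L * (x - x₀) := by
    rw [div_sub_one hx₀pos.ne', mul_div_assoc', div_le_iff₀ hx₀pos]
    nlinarith
  linarith [mul_lt_mul_of_pos_left hlog hb]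

lemma mul_sub_mul_log_of_mul_exp_eq {L b k w : ℝ} (hL : 0 < L) (hb : 0 < b) (hk : 0 < k)
    (hw : w * exp w = -(L / (k * b))) :
    L * (-b * w / L) - b * log (-b * w / L) = b * log k := by
  have hw₀ : 0 < -w := by
    have : 0 < -w * exp w := by rw [neg_mul, hw, neg_neg]; positivity
    exact pos_of_mul_pos_left this (exp_pos w).le
  have hlog : log (-w) + w = log L - log k - log b := by
    have := congrArg log (show -w * exp w = L / (k * b) by rw [neg_mul, hw, neg_neg])
    rw [log_mul hw₀.ne' (exp_pos w).ne', log_exp, log_div hL.ne' (by positivity),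
      log_mul hk.ne' hb.ne'] at this
    linarith
  rw [show -b * w / L = b * -w / L by ring, log_div (by positivity) hL.ne',
    log_mul hb.ne' hw₀.ne', mul_div_cancel₀ _ hL.ne']
  linear_combination -b * hlog

lemma rpow_div_rpow_eq_exp {a x : ℝ} (ha : 0 < a) (hx : 0 < x) (b : ℝ) :
    a ^ x / x ^ b = exp (log a * x - b * log x) := by
  rw [rpow_def_of_pos ha, rpow_def_of_pos hx, ← exp_sub, mul_comm (log x)]

theorem stmt0_general (a b c x : ℝ) (hb : 0 < b) (hc : 0 < c) (ha : 1 < a)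
    (hcond : Real.exp 1 ≤ c ^ ((1 : ℝ) / b) * b / Real.log a)
    (hx : x > -b * lambertWm1 (-Real.log a / (c ^ ((1 : ℝ) / b) * b)) / Real.log a) :
    a ^ x / x ^ b > c := by
  set L := log a
  set k := c ^ ((1 : ℝ) / b)
  have hL : 0 < L := log_pos ha
  have hk : 0 < k := rpow_pos_of_pos hc _
  have ht₀ : 0 < L / (k * b) := by positivity
  have ht₁ : L / (k * b) ≤ exp (-1) := by
    rw [exp_neg, ← inv_div]
    exact inv_anti₀ (exp_pos 1) hcond
  rw [neg_div] at hx
  have hw := lambertWm1_mul_exp_self (neg_le_neg ht₁) (neg_neg_of_pos ht₀)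
  have hw₁ := lambertWm1_le_neg_one (neg_le_neg ht₁) (neg_neg_of_pos ht₀)
  set w := lambertWm1 (-(L / (k * b)))
  have hx₀ : b / L ≤ -b * w / L := div_le_div_of_nonneg_right (by nlinarith) hL.le
  have hxpos : 0 < x := (div_pos hb hL).trans_le hx₀ |>.trans hx
  rw [gt_iff_lt, rpow_div_rpow_eq_exp (zero_lt_one.trans ha) hxpos, ← exp_log hc, exp_lt_exp]
  calc log c = b * log k := by rw [log_rpow hc]; field_simp
    _ = L * (-b * w / L) - b * log (-b * w / L) :=
      (mul_sub_mul_log_of_mul_exp_eq hL hb hk hw).symm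
    _ < L * x - b * log x := strictMonoOn_mul_sub_mul_log hL hb hx₀ (hx₀.trans hx.le) hx

/-- If `a, b, c > 0`, `a > 1`, and `c^(1/b) * b / ln a ≥ e`, then any
`x > -b * W₋₁(-ln a / (c^(1/b) * b)) / ln a` satisfies `a^x / x^b > c`. -/
theorem stmt0 (a b c x : ℝ) (ha0 : 0 < a) (hb : 0 < b) (hc : 0 < c) (ha : 1 < a)
    (hcond : Real.exp 1 ≤ c ^ ((1 : ℝ) / b) * b / Real.log a)
    (hx : x > -b * lambertWm1 (-Real.log a / (c ^ ((1 : ℝ) / b) * b)) / Real.log a) :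
    a ^ x / x ^ b > c :=
  stmt0_general a b c x hb hc ha hcond hx
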